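/- Let e0, e1 be the standard basis of ℂ², x₊ = (e0+e1)/√2, x₋ = (e0−e1)/√2, Q₊ = |x₊⟩⟨x₊|, and for β ∈ ℝ define ξ_β = (1/√2)(x₊⊗x₋ + e^{iβ} x₋⊗x₊) ∈ ℂ⁴. Then the convex hull (over ℝ) of { |ξ_β⟩⟨ξ_β| : β ∈ ℝ } is exactly the set of 4×4 positive semidefinite complex matrices ρ of trace 1 satisfying trace(ρ · (σx ⊗ σx)) = −1, trace(ρ · (Q₊ ⊗ I₂)) = 1/2, and trace(ρ · (I₂ ⊗ Q₊)) = 1/2. -/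

import Mathlib

open Matrix Kronecker
open scoped ComplexOrder

noncomputable section

/-- The outer product `|u⟩⟨v|` of two vectors. -/
def outer {ι : Type*} (u v : ι → ℂ) : Matrix ι ι ℂ :=
  Matrix.of fun i j => u i * star (v j)

/-- The tensor (Kronecker) product of two qubit vectors. -/
def tens (u v : Fin 2 → ℂ) : Fin 2 × Fin 2 → ℂ := fun p => u p.1 * v p.2

def e0 : Fin 2 → ℂ := ![1, 0]
def e1 : Fin 2 → ℂ := ![0, 1]

/-- `x₊ = (e0 + e1)/√2`. -/
def xp : Fin 2 → ℂ := ((Real.sqrt 2 : ℂ))⁻¹ • (e0 + e1)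
/-- `x₋ = (e0 − e1)/√2`. -/
def xm : Fin 2 → ℂ := ((Real.sqrt 2 : ℂ))⁻¹ • (e0 - e1)

/-- The Pauli matrix σx. -/
def sigmaX : Matrix (Fin 2) (Fin 2) ℂ := !![0, 1; 1, 0]

/-- `ξ_β = (1/√2)(x₊⊗x₋ + e^{iβ} x₋⊗x₊)`. -/
def xi (β : ℝ) : Fin 2 × Fin 2 → ℂ :=
  ((Real.sqrt 2 : ℂ))⁻¹ • (tens xp xm + Complex.exp ((β : ℂ) * Complex.I) • tens xm xp)

/-! ### Auxiliary definitions -/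

def Y1 : Fin 2 × Fin 2 → ℂ := fun p => !![(1:ℂ), -1; 1, -1] p.1 p.2
def Y2 : Fin 2 × Fin 2 → ℂ := fun p => !![(1:ℂ), 1; -1, -1] p.1 p.2
def Z1 : Fin 2 × Fin 2 → ℂ := fun _ => 1
def Z2 : Fin 2 × Fin 2 → ℂ := fun p => !![(1:ℂ), -1; -1, 1] p.1 p.2

def rhoc (c cs : ℂ) : Matrix (Fin 2 × Fin 2) (Fin 2 × Fin 2) ℂ :=
  (1/8 : ℂ) • outer Y1 Y1 + (1/8 : ℂ) • outer Y2 Y2 + (c/4) • outer Y1 Y2 + (cs/4) • outer Y2 Y1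

lemma ht2 : ((Real.sqrt 2 : ℂ))⁻¹ * ((Real.sqrt 2 : ℂ))⁻¹ = 1/2 := by
  rw [← Complex.ofReal_inv, ← Complex.ofReal_mul]
  norm_num [← mul_inv, Real.mul_self_sqrt]

lemma hts : star (((Real.sqrt 2 : ℂ))⁻¹) = ((Real.sqrt 2 : ℂ))⁻¹ := by
  rw [← Complex.ofReal_inv, Complex.star_def, Complex.conj_ofReal]

lemma hQ : outer xp xp = !![(1:ℂ)/2, 1/2; 1/2, 1/2] := by
  ext i j
  fin_cases i <;> fin_cases j <;>
    simp [outer, xp, e0, e1, hts, ht2]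

lemma outer_expand (a E : ℂ) (u v : Fin 2 × Fin 2 → ℂ) :
    outer (a • (u + E • v)) (a • (u + E • v))
      = (a * star a) • outer u u + ((a * star a) * star E) • outer u v
        + ((a * star a) * E) • outer v u + ((a * star a) * (E * star E)) • outer v v := by
  ext i j
  simp [outer, StarMul.star_mul, star_add]
  ring

lemma hxi (β : ℝ) : xi β = ((((Real.sqrt 2 : ℂ))⁻¹ * (1/2)) : ℂ) •
    (Y1 + Complex.exp ((β : ℂ) * Complex.I) • Y2) := by
  funext p; obtain ⟨a, b⟩ := p
  fin_cases a <;> fin_cases b <;>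
    · simp [xi, tens, xp, xm, e0, e1, Y1, Y2]
      ring_nf
      rw [show ((Real.sqrt 2:ℂ))⁻¹ ^ 3
        = ((Real.sqrt 2:ℂ))⁻¹ * (((Real.sqrt 2:ℂ))⁻¹ * ((Real.sqrt 2:ℂ))⁻¹) by ring, ht2]
      ring

lemma outer_xi_eq (β : ℝ) : outer (xi β) (xi β)
    = rhoc (star (Complex.exp ((β : ℂ) * Complex.I)) / 2)
        (Complex.exp ((β : ℂ) * Complex.I) / 2) := by
  set E := Complex.exp ((β : ℂ) * Complex.I) with hE
  have hEE : E * star E = 1 := by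
    rw [hE, Complex.star_def, ← Complex.exp_conj, ← Complex.exp_add]
    simp [Complex.conj_ofReal]
  have hA : (((Real.sqrt 2 : ℂ))⁻¹ * (1/2)) * star (((Real.sqrt 2 : ℂ))⁻¹ * (1/2)) = 1/8 := by
    simp only [star_mul']
    rw [hts]
    norm_num
    linear_combination (1/4 : ℂ) * ht2
  rw [hxi, ← hE, outer_expand, hA, hEE, rhoc]
  match_scalars <;> ring

lemma rhoc_trace (c cs : ℂ) : (rhoc c cs).trace = 1 := by
  simp [rhoc, outer, Y1, Y2, Matrix.trace, Matrix.diag, Fintype.sum_prod_type, Fin.sum_univ_two]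
  ring

lemma rhoc_tr1 (c cs : ℂ) : (rhoc c cs * (sigmaX ⊗ₖ sigmaX)).trace = -1 := by
  simp [rhoc, outer, Y1, Y2, sigmaX, Matrix.trace, Matrix.diag, Matrix.mul_apply,
    Fintype.sum_prod_type, Fin.sum_univ_two]
  ring

lemma rhoc_tr2 (c cs : ℂ) :
    (rhoc c cs * (!![(1:ℂ)/2, 1/2; 1/2, 1/2]
      ⊗ₖ (1 : Matrix (Fin 2) (Fin 2) ℂ))).trace = 1/2 := by
  simp [rhoc, outer, Y1, Y2, Matrix.trace, Matrix.diag, Matrix.mul_apply, Matrix.one_apply,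
    Fintype.sum_prod_type, Fin.sum_univ_two]
  ring

lemma rhoc_tr3 (c cs : ℂ) :
    (rhoc c cs * ((1 : Matrix (Fin 2) (Fin 2) ℂ)
      ⊗ₖ !![(1:ℂ)/2, 1/2; 1/2, 1/2])).trace = 1/2 := by
  simp [rhoc, outer, Y1, Y2, Matrix.trace, Matrix.diag, Matrix.mul_apply, Matrix.one_apply,
    Fintype.sum_prod_type, Fin.sum_univ_two]
  ring

lemma outer_self_posSemidef (u : Fin 2 × Fin 2 → ℂ) : (outer u u).PosSemidef := by
  refine Matrix.PosSemidef.of_dotProduct_mulVec_nonneg ?_ ?_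
  · ext i j
    simp [outer, Matrix.conjTranspose_apply]
    ring
  · intro x
    have h : star x ⬝ᵥ (outer u u *ᵥ x) = star (star u ⬝ᵥ x) * (star u ⬝ᵥ x) := by
      simp [outer, Matrix.mulVec, dotProduct, Finset.mul_sum, Finset.sum_mul,
        Fintype.sum_prod_type, Fin.sum_univ_two]
      ring
    rw [h]
    exact star_mul_self_nonneg _

lemma trace_combo (ρ1 ρ2 A : Matrix (Fin 2 × Fin 2) (Fin 2 × Fin 2) ℂ) (a b : ℝ) :
    ((a • ρ1 + b • ρ2) * A).trace = (a : ℂ) * (ρ1 * A).trace + (b : ℂ) * (ρ2 * A).trace := by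
  rw [Matrix.add_mul, Matrix.smul_mul, Matrix.smul_mul, Matrix.trace_add, Matrix.trace_smul,
    Matrix.trace_smul]
  simp [Complex.real_smul]

lemma psd_combo {ρ1 ρ2 : Matrix (Fin 2 × Fin 2) (Fin 2 × Fin 2) ℂ} (h1 : ρ1.PosSemidef)
    (h2 : ρ2.PosSemidef) {a b : ℝ} (ha : 0 ≤ a) (hb : 0 ≤ b) :
    (a • ρ1 + b • ρ2).PosSemidef := by
  refine Matrix.PosSemidef.of_dotProduct_mulVec_nonneg ?_ ?_
  · unfold Matrix.IsHermitian
    rw [Matrix.conjTranspose_add, Matrix.conjTranspose_smul, Matrix.conjTranspose_smul, h1.1, h2.1]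
    simp
  · intro x
    rw [Matrix.add_mulVec, Matrix.smul_mulVec, Matrix.smul_mulVec,
      dotProduct_add, dotProduct_smul, dotProduct_smul]
    have e1 := h1.dotProduct_mulVec_nonneg x
    have e2 := h2.dotProduct_mulVec_nonneg x
    have key : ∀ (t : ℝ) (z : ℂ), 0 ≤ t → 0 ≤ z → 0 ≤ t • z := by
      intro t z ht hz
      rw [Complex.real_smul]
      exact mul_nonneg (by exact_mod_cast Complex.zero_le_real.mpr ht) hz
    exact add_nonneg (key a _ ha e1) (key b _ hb e2)

lemma rhs_convex : Convex ℝ {ρ : Matrix (Fin 2 × Fin 2) (Fin 2 × Fin 2) ℂ |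
          ρ.PosSemidef ∧ ρ.trace = 1 ∧
          (ρ * (sigmaX ⊗ₖ sigmaX)).trace = -1 ∧
          (ρ * (outer xp xp ⊗ₖ (1 : Matrix (Fin 2) (Fin 2) ℂ))).trace = 1/2 ∧
          (ρ * ((1 : Matrix (Fin 2) (Fin 2) ℂ) ⊗ₖ outer xp xp)).trace = 1/2} := by
  rintro ρ1 ⟨p1, t1, a1, b1, c1⟩ ρ2 ⟨p2, t2, a2, b2, c2⟩ a b ha hb hab
  have hab' : (a : ℂ) + b = 1 := by exact_mod_cast congrArg (Complex.ofReal) hab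
  refine ⟨psd_combo p1 p2 ha hb, ?_, ?_, ?_, ?_⟩
  · have h := trace_combo ρ1 ρ2 1 a b
    simp only [Matrix.mul_one] at h ⊢
    rw [h, t1, t2]
    linear_combination hab'
  · rw [trace_combo, a1, a2]; linear_combination (-1 : ℂ) * hab'
  · rw [trace_combo, b1, b2]; linear_combination (1/2 : ℂ) * hab'
  · rw [trace_combo, c1, c2]; linear_combination (1/2 : ℂ) * hab'

lemma rhoc_combo (a b : ℝ) (hab : a + b = 1) (c1 cs1 c2 cs2 : ℂ) :
    a • rhoc c1 cs1 + b • rhoc c2 cs2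
      = rhoc ((a : ℂ) * c1 + (b : ℂ) * c2) ((a : ℂ) * cs1 + (b : ℂ) * cs2) := by
  have hab' : (a : ℂ) + b = 1 := by exact_mod_cast congrArg (Complex.ofReal) hab
  have hr : ∀ (t : ℝ) (M : Matrix (Fin 2 × Fin 2) (Fin 2 × Fin 2) ℂ), t • M = ((t : ℂ)) • M := by
    intro t M; ext i j; simp [Complex.real_smul]
  rw [rhoc, rhoc, rhoc, hr a, hr b]
  match_scalars
  · linear_combination (1/8 : ℂ) * hab'
  · linear_combination (1/8 : ℂ) * hab'
  · ring
  · ring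

lemma disk_point (c : ℂ) :
    ((1/2 + ‖c‖ : ℝ) : ℂ) * (star (Complex.exp (((-c.arg : ℝ) : ℂ) * Complex.I)) / 2)
      + ((1 - (1/2 + ‖c‖) : ℝ) : ℂ)
        * (star (Complex.exp (((-c.arg + Real.pi : ℝ) : ℂ) * Complex.I)) / 2) = c := by
  have h1 : Complex.exp (((-c.arg + Real.pi : ℝ) : ℂ) * Complex.I)
      = - Complex.exp (((-c.arg : ℝ) : ℂ) * Complex.I) := by
    push_cast
    rw [add_mul, Complex.exp_add, Complex.exp_pi_mul_I]
    ring
  have h2 : star (Complex.exp (((-c.arg : ℝ) : ℂ) * Complex.I))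
      = Complex.exp ((c.arg : ℂ) * Complex.I) := by
    rw [Complex.star_def, ← Complex.exp_conj]
    congr 1
    simp [Complex.conj_ofReal]
  rw [h1, star_neg, h2]
  push_cast
  linear_combination Complex.norm_mul_exp_arg_mul_I c

lemma disk_point_star (c : ℂ) :
    ((1/2 + ‖c‖ : ℝ) : ℂ) * (Complex.exp (((-c.arg : ℝ) : ℂ) * Complex.I) / 2)
      + ((1 - (1/2 + ‖c‖) : ℝ) : ℂ)
        * (Complex.exp (((-c.arg + Real.pi : ℝ) : ℂ) * Complex.I) / 2) = star c := by
  have h1 : Complex.exp (((-c.arg + Real.pi : ℝ) : ℂ) * Complex.I)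
      = - Complex.exp (((-c.arg : ℝ) : ℂ) * Complex.I) := by
    push_cast
    rw [add_mul, Complex.exp_add, Complex.exp_pi_mul_I]
    ring
  have h3 : (‖c‖ : ℂ) * Complex.exp (-(c.arg : ℂ) * Complex.I) = star c := by
    conv_rhs => rw [Complex.star_def, ← Complex.norm_mul_exp_arg_mul_I c]
    rw [_root_.map_mul, Complex.conj_ofReal, ← Complex.exp_conj, _root_.map_mul,
      Complex.conj_ofReal, Complex.conj_I]
    ring_nf
  rw [h1]
  push_cast
  linear_combination h3

lemma rhoc_quad (c : ℂ) :
    star (fun p => (-c) * Y1 p + ((‖c‖ : ℝ) : ℂ) * Y2 p)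
        ⬝ᵥ (rhoc c (star c)) *ᵥ (fun p => (-c) * Y1 p + ((‖c‖ : ℝ) : ℂ) * Y2 p)
      = ((4 * (‖c‖)^2 - 8 * (‖c‖)^3 : ℝ) : ℂ) := by
  have habs : c * (starRingEnd ℂ) c = (((‖c‖ : ℝ) : ℂ))^2 := by
    rw [Complex.mul_conj, Complex.normSq_eq_norm_sq]
    push_cast
    ring
  simp only [rhoc, outer, Y1, Y2, dotProduct, Matrix.mulVec, Matrix.add_apply,
    Matrix.smul_apply, smul_eq_mul, Matrix.of_apply, Pi.star_apply, star_add,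
    StarMul.star_mul, star_neg, Fintype.sum_prod_type, Fin.sum_univ_two,
    Complex.star_def, Complex.conj_ofReal]
  push_cast
  simp [Matrix.cons_val', Matrix.cons_val_zero, Matrix.cons_val_one, Matrix.head_cons]
  ring_nf
  linear_combination (2 - 8*((‖c‖ : ℝ) : ℂ)) * habs

set_option maxHeartbeats 3200000 in
theorem scenario_two_states_characterization :
    convexHull ℝ {M | ∃ β : ℝ, M = outer (xi β) (xi β)}
      = {ρ : Matrix (Fin 2 × Fin 2) (Fin 2 × Fin 2) ℂ |
          ρ.PosSemidef ∧ ρ.trace = 1 ∧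
          (ρ * (sigmaX ⊗ₖ sigmaX)).trace = -1 ∧
          (ρ * (outer xp xp ⊗ₖ (1 : Matrix (Fin 2) (Fin 2) ℂ))).trace = 1/2 ∧
          (ρ * ((1 : Matrix (Fin 2) (Fin 2) ℂ) ⊗ₖ outer xp xp)).trace = 1/2} := by
  apply Set.Subset.antisymm
  · -- easy direction
    apply convexHull_min _ rhs_convex
    rintro M ⟨β, rfl⟩
    refine ⟨outer_self_posSemidef _, ?_, ?_, ?_, ?_⟩
    · rw [outer_xi_eq]; exact rhoc_trace _ _
    · rw [outer_xi_eq]; exact rhoc_tr1 _ _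
    · rw [outer_xi_eq, hQ]; exact rhoc_tr2 _ _
    · rw [outer_xi_eq, hQ]; exact rhoc_tr3 _ _
  · rintro ρ ⟨hpsd, htr, h1, h2, h3⟩
    rw [hQ] at h2 h3
    -- expanded linear constraints
    have Htr : ρ (0,0) (0,0) + ρ (0,1) (0,1) + ρ (1,0) (1,0) + ρ (1,1) (1,1) = 1 := by
      simp only [Matrix.trace, Matrix.diag, Fintype.sum_prod_type, Fin.sum_univ_two] at htr
      linear_combination htr
    have H1 : ρ (0,0) (1,1) + ρ (0,1) (1,0) + ρ (1,0) (0,1) + ρ (1,1) (0,0) = -1 := by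
      simp [Matrix.trace, Matrix.diag, Matrix.mul_apply, sigmaX,
        Fintype.sum_prod_type, Fin.sum_univ_two] at h1
      linear_combination h1
    have H2 : ρ (0,0) (0,0) + ρ (0,0) (1,0) + ρ (0,1) (0,1) + ρ (0,1) (1,1)
        + ρ (1,0) (0,0) + ρ (1,0) (1,0) + ρ (1,1) (0,1) + ρ (1,1) (1,1) = 1 := by
      simp [Matrix.trace, Matrix.diag, Matrix.mul_apply, Matrix.one_apply,
        Fintype.sum_prod_type, Fin.sum_univ_two] at h2
      linear_combination (2 : ℂ) * h2
    have H3 : ρ (0,0) (0,0) + ρ (0,0) (0,1) + ρ (0,1) (0,0) + ρ (0,1) (0,1)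
        + ρ (1,0) (1,0) + ρ (1,0) (1,1) + ρ (1,1) (1,0) + ρ (1,1) (1,1) = 1 := by
      simp [Matrix.trace, Matrix.diag, Matrix.mul_apply, Matrix.one_apply,
        Fintype.sum_prod_type, Fin.sum_univ_two] at h3
      linear_combination (2 : ℂ) * h3
    -- support condition
    have hq0 : star Z1 ⬝ᵥ ρ *ᵥ Z1 + star Z2 ⬝ᵥ ρ *ᵥ Z2 = 0 := by
      simp [Z1, Z2, dotProduct, Matrix.mulVec, Fintype.sum_prod_type, Fin.sum_univ_two]
      linear_combination (2 : ℂ) * Htr + (2 : ℂ) * H1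
    have hzq1 : star Z1 ⬝ᵥ ρ *ᵥ Z1 = 0 := by
      have hle : star Z1 ⬝ᵥ ρ *ᵥ Z1 ≤ 0 := by
        rw [eq_neg_of_add_eq_zero_left hq0]
        exact neg_nonpos.mpr (hpsd.dotProduct_mulVec_nonneg Z2)
      exact le_antisymm hle (hpsd.dotProduct_mulVec_nonneg Z1)
    have hzq2 : star Z2 ⬝ᵥ ρ *ᵥ Z2 = 0 := by
      have hle : star Z2 ⬝ᵥ ρ *ᵥ Z2 ≤ 0 := by
        rw [eq_neg_of_add_eq_zero_right hq0]
        exact neg_nonpos.mpr (hpsd.dotProduct_mulVec_nonneg Z1)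
      exact le_antisymm hle (hpsd.dotProduct_mulVec_nonneg Z2)
    have hz1 : ρ *ᵥ Z1 = 0 := (hpsd.dotProduct_mulVec_zero_iff Z1).mp hzq1
    have hz2 : ρ *ᵥ Z2 = 0 := (hpsd.dotProduct_mulVec_zero_iff Z2).mp hzq2
    have hz1' : star Z1 ᵥ* ρ = 0 := by
      have h := congrArg star hz1
      rwa [Matrix.star_mulVec, hpsd.1, star_zero] at h
    have hz2' : star Z2 ᵥ* ρ = 0 := by
      have h := congrArg star hz2
      rwa [Matrix.star_mulVec, hpsd.1, star_zero] at h
    -- row equations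
    have r10 : ρ (0,0) (0,0) + ρ (0,0) (0,1) + ρ (0,0) (1,0) + ρ (0,0) (1,1) = 0 := by
      have h := congrFun hz1 (0,0)
      simp [Z1, Matrix.mulVec, dotProduct, Fintype.sum_prod_type, Fin.sum_univ_two] at h
      linear_combination h
    have r11 : ρ (0,1) (0,0) + ρ (0,1) (0,1) + ρ (0,1) (1,0) + ρ (0,1) (1,1) = 0 := by
      have h := congrFun hz1 (0,1)
      simp [Z1, Matrix.mulVec, dotProduct, Fintype.sum_prod_type, Fin.sum_univ_two] at h
      linear_combination h
    have r12 : ρ (1,0) (0,0) + ρ (1,0) (0,1) + ρ (1,0) (1,0) + ρ (1,0) (1,1) = 0 := by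
      have h := congrFun hz1 (1,0)
      simp [Z1, Matrix.mulVec, dotProduct, Fintype.sum_prod_type, Fin.sum_univ_two] at h
      linear_combination h
    have r13 : ρ (1,1) (0,0) + ρ (1,1) (0,1) + ρ (1,1) (1,0) + ρ (1,1) (1,1) = 0 := by
      have h := congrFun hz1 (1,1)
      simp [Z1, Matrix.mulVec, dotProduct, Fintype.sum_prod_type, Fin.sum_univ_two] at h
      linear_combination h
    have r20 : ρ (0,0) (0,0) - ρ (0,0) (0,1) - ρ (0,0) (1,0) + ρ (0,0) (1,1) = 0 := by
      have h := congrFun hz2 (0,0)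
      simp [Z2, Matrix.mulVec, dotProduct, Fintype.sum_prod_type, Fin.sum_univ_two] at h
      linear_combination h
    have r21 : ρ (0,1) (0,0) - ρ (0,1) (0,1) - ρ (0,1) (1,0) + ρ (0,1) (1,1) = 0 := by
      have h := congrFun hz2 (0,1)
      simp [Z2, Matrix.mulVec, dotProduct, Fintype.sum_prod_type, Fin.sum_univ_two] at h
      linear_combination h
    have r22 : ρ (1,0) (0,0) - ρ (1,0) (0,1) - ρ (1,0) (1,0) + ρ (1,0) (1,1) = 0 := by
      have h := congrFun hz2 (1,0)
      simp [Z2, Matrix.mulVec, dotProduct, Fintype.sum_prod_type, Fin.sum_univ_two] at h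
      linear_combination h
    have r23 : ρ (1,1) (0,0) - ρ (1,1) (0,1) - ρ (1,1) (1,0) + ρ (1,1) (1,1) = 0 := by
      have h := congrFun hz2 (1,1)
      simp [Z2, Matrix.mulVec, dotProduct, Fintype.sum_prod_type, Fin.sum_univ_two] at h
      linear_combination h
    -- column equations
    have c10 : ρ (0,0) (0,0) + ρ (0,1) (0,0) + ρ (1,0) (0,0) + ρ (1,1) (0,0) = 0 := by
      have h := congrFun hz1' (0,0)
      simp [Z1, Matrix.vecMul, dotProduct, Fintype.sum_prod_type, Fin.sum_univ_two] at h
      linear_combination h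
    have c11 : ρ (0,0) (0,1) + ρ (0,1) (0,1) + ρ (1,0) (0,1) + ρ (1,1) (0,1) = 0 := by
      have h := congrFun hz1' (0,1)
      simp [Z1, Matrix.vecMul, dotProduct, Fintype.sum_prod_type, Fin.sum_univ_two] at h
      linear_combination h
    have c12 : ρ (0,0) (1,0) + ρ (0,1) (1,0) + ρ (1,0) (1,0) + ρ (1,1) (1,0) = 0 := by
      have h := congrFun hz1' (1,0)
      simp [Z1, Matrix.vecMul, dotProduct, Fintype.sum_prod_type, Fin.sum_univ_two] at h
      linear_combination h
    have c13 : ρ (0,0) (1,1) + ρ (0,1) (1,1) + ρ (1,0) (1,1) + ρ (1,1) (1,1) = 0 := by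
      have h := congrFun hz1' (1,1)
      simp [Z1, Matrix.vecMul, dotProduct, Fintype.sum_prod_type, Fin.sum_univ_two] at h
      linear_combination h
    have c20 : ρ (0,0) (0,0) - ρ (0,1) (0,0) - ρ (1,0) (0,0) + ρ (1,1) (0,0) = 0 := by
      have h := congrFun hz2' (0,0)
      simp [Z2, Matrix.vecMul, dotProduct, Fintype.sum_prod_type, Fin.sum_univ_two] at h
      linear_combination h
    have c21 : ρ (0,0) (0,1) - ρ (0,1) (0,1) - ρ (1,0) (0,1) + ρ (1,1) (0,1) = 0 := by
      have h := congrFun hz2' (0,1)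
      simp [Z2, Matrix.vecMul, dotProduct, Fintype.sum_prod_type, Fin.sum_univ_two] at h
      linear_combination h
    have c22 : ρ (0,0) (1,0) - ρ (0,1) (1,0) - ρ (1,0) (1,0) + ρ (1,1) (1,0) = 0 := by
      have h := congrFun hz2' (1,0)
      simp [Z2, Matrix.vecMul, dotProduct, Fintype.sum_prod_type, Fin.sum_univ_two] at h
      linear_combination h
    have c23 : ρ (0,0) (1,1) - ρ (0,1) (1,1) - ρ (1,0) (1,1) + ρ (1,1) (1,1) = 0 := by
      have h := congrFun hz2' (1,1)
      simp [Z2, Matrix.vecMul, dotProduct, Fintype.sum_prod_type, Fin.sum_univ_two] at h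
      linear_combination h
    -- hermitian entries
    have hst : ∀ i j, star (ρ i j) = ρ j i := by
      intro i j
      conv_rhs => rw [← hpsd.1]
      simp [Matrix.conjTranspose_apply]
    -- the off-diagonal coefficient
    set d : ℂ := ρ (0,0) (0,0) + ρ (0,0) (0,1) - ρ (0,0) (1,0) - ρ (0,0) (1,1)
      - ρ (0,1) (0,0) - ρ (0,1) (0,1) + ρ (0,1) (1,0) + ρ (0,1) (1,1)
      + ρ (1,0) (0,0) + ρ (1,0) (0,1) - ρ (1,0) (1,0) - ρ (1,0) (1,1)
      - ρ (1,1) (0,0) - ρ (1,1) (0,1) + ρ (1,1) (1,0) + ρ (1,1) (1,1) with hd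
    have hds : star d = ρ (0,0) (0,0) + ρ (0,1) (0,0) - ρ (1,0) (0,0) - ρ (1,1) (0,0)
        - ρ (0,0) (0,1) - ρ (0,1) (0,1) + ρ (1,0) (0,1) + ρ (1,1) (0,1)
        + ρ (0,0) (1,0) + ρ (0,1) (1,0) - ρ (1,0) (1,0) - ρ (1,1) (1,0)
        - ρ (0,0) (1,1) - ρ (0,1) (1,1) + ρ (1,0) (1,1) + ρ (1,1) (1,1) := by
      rw [hd]
      simp only [star_add, star_sub, hst]
      try ring
    -- reconstruction
    have hrec : ρ = rhoc (d/4) (star d / 4) := by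
      apply Matrix.ext
      rintro ⟨a, b⟩ ⟨e, f⟩
      fin_cases a <;> fin_cases b <;> fin_cases e <;> fin_cases f
      · show ρ ((0,0)) ((0,0)) = rhoc (d/4) (star d / 4) ((0,0)) ((0,0))
        simp only [rhoc, outer, Y1, Y2, Matrix.add_apply, Matrix.smul_apply, Matrix.of_apply,
          smul_eq_mul, Matrix.cons_val', Matrix.cons_val_zero, Matrix.cons_val_one,
          Matrix.head_cons, Matrix.head_fin_const, star_one, star_neg]
        linear_combination (-1/8 : ℂ) * Htr + (-3/8 : ℂ) * H1 + (1/4 : ℂ) * r10 + (1/4 : ℂ) * r20 + (1/8 : ℂ) * r11 + (-1/8 : ℂ) * r21 + (1/8 : ℂ) * r12 + (-1/8 : ℂ) * r22 + (1/4 : ℂ) * c10 + (1/4 : ℂ) * c20 + (-1/16 : ℂ) * hd + (-1/16 : ℂ) * hds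
      · show ρ ((0,0)) ((0,1)) = rhoc (d/4) (star d / 4) ((0,0)) ((0,1))
        simp only [rhoc, outer, Y1, Y2, Matrix.add_apply, Matrix.smul_apply, Matrix.of_apply,
          smul_eq_mul, Matrix.cons_val', Matrix.cons_val_zero, Matrix.cons_val_one,
          Matrix.head_cons, Matrix.head_fin_const, star_one, star_neg]
        linear_combination (1/2 : ℂ) * Htr + (-3/8 : ℂ) * H2 + (-1/8 : ℂ) * H3 + (1/4 : ℂ) * r10 + (-1/4 : ℂ) * r20 + (1/8 : ℂ) * r11 + (1/8 : ℂ) * r21 + (1/8 : ℂ) * r12 + (1/8 : ℂ) * r22 + (1/4 : ℂ) * c11 + (1/4 : ℂ) * c21 + (-1/16 : ℂ) * hd + (1/16 : ℂ) * hds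
      · show ρ ((0,0)) ((1,0)) = rhoc (d/4) (star d / 4) ((0,0)) ((1,0))
        simp only [rhoc, outer, Y1, Y2, Matrix.add_apply, Matrix.smul_apply, Matrix.of_apply,
          smul_eq_mul, Matrix.cons_val', Matrix.cons_val_zero, Matrix.cons_val_one,
          Matrix.head_cons, Matrix.head_fin_const, star_one, star_neg]
        linear_combination (-1/2 : ℂ) * Htr + (3/8 : ℂ) * H2 + (1/8 : ℂ) * H3 + (1/4 : ℂ) * r10 + (-1/4 : ℂ) * r20 + (-1/8 : ℂ) * r11 + (-1/8 : ℂ) * r21 + (-1/8 : ℂ) * r12 + (-1/8 : ℂ) * r22 + (-1/4 : ℂ) * c11 + (-1/4 : ℂ) * c21 + (1/16 : ℂ) * hd + (-1/16 : ℂ) * hds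
      · show ρ ((0,0)) ((1,1)) = rhoc (d/4) (star d / 4) ((0,0)) ((1,1))
        simp only [rhoc, outer, Y1, Y2, Matrix.add_apply, Matrix.smul_apply, Matrix.of_apply,
          smul_eq_mul, Matrix.cons_val', Matrix.cons_val_zero, Matrix.cons_val_one,
          Matrix.head_cons, Matrix.head_fin_const, star_one, star_neg]
        linear_combination (1/8 : ℂ) * Htr + (3/8 : ℂ) * H1 + (1/4 : ℂ) * r10 + (1/4 : ℂ) * r20 + (-1/8 : ℂ) * r11 + (1/8 : ℂ) * r21 + (-1/8 : ℂ) * r12 + (1/8 : ℂ) * r22 + (-1/4 : ℂ) * c10 + (-1/4 : ℂ) * c20 + (1/16 : ℂ) * hd + (1/16 : ℂ) * hds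
      · show ρ ((0,1)) ((0,0)) = rhoc (d/4) (star d / 4) ((0,1)) ((0,0))
        simp only [rhoc, outer, Y1, Y2, Matrix.add_apply, Matrix.smul_apply, Matrix.of_apply,
          smul_eq_mul, Matrix.cons_val', Matrix.cons_val_zero, Matrix.cons_val_one,
          Matrix.head_cons, Matrix.head_fin_const, star_one, star_neg]
        linear_combination (-1/8 : ℂ) * H2 + (1/8 : ℂ) * H3 + (1/8 : ℂ) * r11 + (1/8 : ℂ) * r21 + (-1/8 : ℂ) * r12 + (-1/8 : ℂ) * r22 + (1/4 : ℂ) * c10 + (-1/4 : ℂ) * c20 + (1/16 : ℂ) * hd + (-1/16 : ℂ) * hds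
      · show ρ ((0,1)) ((0,1)) = rhoc (d/4) (star d / 4) ((0,1)) ((0,1))
        simp only [rhoc, outer, Y1, Y2, Matrix.add_apply, Matrix.smul_apply, Matrix.of_apply,
          smul_eq_mul, Matrix.cons_val', Matrix.cons_val_zero, Matrix.cons_val_one,
          Matrix.head_cons, Matrix.head_fin_const, star_one, star_neg]
        linear_combination (1/8 : ℂ) * Htr + (-1/8 : ℂ) * H1 + (1/8 : ℂ) * r11 + (-1/8 : ℂ) * r21 + (-1/8 : ℂ) * r12 + (1/8 : ℂ) * r22 + (1/4 : ℂ) * c11 + (-1/4 : ℂ) * c21 + (1/16 : ℂ) * hd + (1/16 : ℂ) * hds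
      · show ρ ((0,1)) ((1,0)) = rhoc (d/4) (star d / 4) ((0,1)) ((1,0))
        simp only [rhoc, outer, Y1, Y2, Matrix.add_apply, Matrix.smul_apply, Matrix.of_apply,
          smul_eq_mul, Matrix.cons_val', Matrix.cons_val_zero, Matrix.cons_val_one,
          Matrix.head_cons, Matrix.head_fin_const, star_one, star_neg]
        linear_combination (-1/8 : ℂ) * Htr + (1/8 : ℂ) * H1 + (3/8 : ℂ) * r11 + (-3/8 : ℂ) * r21 + (1/8 : ℂ) * r12 + (-1/8 : ℂ) * r22 + (-1/4 : ℂ) * c11 + (1/4 : ℂ) * c21 + (-1/16 : ℂ) * hd + (-1/16 : ℂ) * hds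
      · show ρ ((0,1)) ((1,1)) = rhoc (d/4) (star d / 4) ((0,1)) ((1,1))
        simp only [rhoc, outer, Y1, Y2, Matrix.add_apply, Matrix.smul_apply, Matrix.of_apply,
          smul_eq_mul, Matrix.cons_val', Matrix.cons_val_zero, Matrix.cons_val_one,
          Matrix.head_cons, Matrix.head_fin_const, star_one, star_neg]
        linear_combination (1/8 : ℂ) * H2 + (-1/8 : ℂ) * H3 + (3/8 : ℂ) * r11 + (3/8 : ℂ) * r21 + (1/8 : ℂ) * r12 + (1/8 : ℂ) * r22 + (-1/4 : ℂ) * c10 + (1/4 : ℂ) * c20 + (-1/16 : ℂ) * hd + (1/16 : ℂ) * hds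
      · show ρ ((1,0)) ((0,0)) = rhoc (d/4) (star d / 4) ((1,0)) ((0,0))
        simp only [rhoc, outer, Y1, Y2, Matrix.add_apply, Matrix.smul_apply, Matrix.of_apply,
          smul_eq_mul, Matrix.cons_val', Matrix.cons_val_zero, Matrix.cons_val_one,
          Matrix.head_cons, Matrix.head_fin_const, star_one, star_neg]
        linear_combination (1/8 : ℂ) * H2 + (-1/8 : ℂ) * H3 + (-1/8 : ℂ) * r11 + (-1/8 : ℂ) * r21 + (1/8 : ℂ) * r12 + (1/8 : ℂ) * r22 + (1/4 : ℂ) * c10 + (-1/4 : ℂ) * c20 + (-1/16 : ℂ) * hd + (1/16 : ℂ) * hds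
      · show ρ ((1,0)) ((0,1)) = rhoc (d/4) (star d / 4) ((1,0)) ((0,1))
        simp only [rhoc, outer, Y1, Y2, Matrix.add_apply, Matrix.smul_apply, Matrix.of_apply,
          smul_eq_mul, Matrix.cons_val', Matrix.cons_val_zero, Matrix.cons_val_one,
          Matrix.head_cons, Matrix.head_fin_const, star_one, star_neg]
        linear_combination (-1/8 : ℂ) * Htr + (1/8 : ℂ) * H1 + (-1/8 : ℂ) * r11 + (1/8 : ℂ) * r21 + (1/8 : ℂ) * r12 + (-1/8 : ℂ) * r22 + (1/4 : ℂ) * c11 + (-1/4 : ℂ) * c21 + (-1/16 : ℂ) * hd + (-1/16 : ℂ) * hds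
      · show ρ ((1,0)) ((1,0)) = rhoc (d/4) (star d / 4) ((1,0)) ((1,0))
        simp only [rhoc, outer, Y1, Y2, Matrix.add_apply, Matrix.smul_apply, Matrix.of_apply,
          smul_eq_mul, Matrix.cons_val', Matrix.cons_val_zero, Matrix.cons_val_one,
          Matrix.head_cons, Matrix.head_fin_const, star_one, star_neg]
        linear_combination (1/8 : ℂ) * Htr + (-1/8 : ℂ) * H1 + (1/8 : ℂ) * r11 + (-1/8 : ℂ) * r21 + (3/8 : ℂ) * r12 + (-3/8 : ℂ) * r22 + (-1/4 : ℂ) * c11 + (1/4 : ℂ) * c21 + (1/16 : ℂ) * hd + (1/16 : ℂ) * hds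
      · show ρ ((1,0)) ((1,1)) = rhoc (d/4) (star d / 4) ((1,0)) ((1,1))
        simp only [rhoc, outer, Y1, Y2, Matrix.add_apply, Matrix.smul_apply, Matrix.of_apply,
          smul_eq_mul, Matrix.cons_val', Matrix.cons_val_zero, Matrix.cons_val_one,
          Matrix.head_cons, Matrix.head_fin_const, star_one, star_neg]
        linear_combination (-1/8 : ℂ) * H2 + (1/8 : ℂ) * H3 + (1/8 : ℂ) * r11 + (1/8 : ℂ) * r21 + (3/8 : ℂ) * r12 + (3/8 : ℂ) * r22 + (-1/4 : ℂ) * c10 + (1/4 : ℂ) * c20 + (1/16 : ℂ) * hd + (-1/16 : ℂ) * hds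
      · show ρ ((1,1)) ((0,0)) = rhoc (d/4) (star d / 4) ((1,1)) ((0,0))
        simp only [rhoc, outer, Y1, Y2, Matrix.add_apply, Matrix.smul_apply, Matrix.of_apply,
          smul_eq_mul, Matrix.cons_val', Matrix.cons_val_zero, Matrix.cons_val_one,
          Matrix.head_cons, Matrix.head_fin_const, star_one, star_neg]
        linear_combination (1/8 : ℂ) * Htr + (3/8 : ℂ) * H1 + (-1/4 : ℂ) * r10 + (-1/4 : ℂ) * r20 + (-1/8 : ℂ) * r11 + (1/8 : ℂ) * r21 + (-1/8 : ℂ) * r12 + (1/8 : ℂ) * r22 + (1/4 : ℂ) * c10 + (1/4 : ℂ) * c20 + (1/16 : ℂ) * hd + (1/16 : ℂ) * hds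
      · show ρ ((1,1)) ((0,1)) = rhoc (d/4) (star d / 4) ((1,1)) ((0,1))
        simp only [rhoc, outer, Y1, Y2, Matrix.add_apply, Matrix.smul_apply, Matrix.of_apply,
          smul_eq_mul, Matrix.cons_val', Matrix.cons_val_zero, Matrix.cons_val_one,
          Matrix.head_cons, Matrix.head_fin_const, star_one, star_neg]
        linear_combination (-1/2 : ℂ) * Htr + (3/8 : ℂ) * H2 + (1/8 : ℂ) * H3 + (-1/4 : ℂ) * r10 + (1/4 : ℂ) * r20 + (-1/8 : ℂ) * r11 + (-1/8 : ℂ) * r21 + (-1/8 : ℂ) * r12 + (-1/8 : ℂ) * r22 + (1/4 : ℂ) * c11 + (1/4 : ℂ) * c21 + (1/16 : ℂ) * hd + (-1/16 : ℂ) * hds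
      · show ρ ((1,1)) ((1,0)) = rhoc (d/4) (star d / 4) ((1,1)) ((1,0))
        simp only [rhoc, outer, Y1, Y2, Matrix.add_apply, Matrix.smul_apply, Matrix.of_apply,
          smul_eq_mul, Matrix.cons_val', Matrix.cons_val_zero, Matrix.cons_val_one,
          Matrix.head_cons, Matrix.head_fin_const, star_one, star_neg]
        linear_combination (-3/2 : ℂ) * Htr + (5/8 : ℂ) * H2 + (7/8 : ℂ) * H3 + (-1/4 : ℂ) * r10 + (1/4 : ℂ) * r20 + (-3/8 : ℂ) * r11 + (-3/8 : ℂ) * r21 + (-3/8 : ℂ) * r12 + (-3/8 : ℂ) * r22 + (-1/4 : ℂ) * c11 + (-1/4 : ℂ) * c21 + (-1/16 : ℂ) * hd + (1/16 : ℂ) * hds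
      · show ρ ((1,1)) ((1,1)) = rhoc (d/4) (star d / 4) ((1,1)) ((1,1))
        simp only [rhoc, outer, Y1, Y2, Matrix.add_apply, Matrix.smul_apply, Matrix.of_apply,
          smul_eq_mul, Matrix.cons_val', Matrix.cons_val_zero, Matrix.cons_val_one,
          Matrix.head_cons, Matrix.head_fin_const, star_one, star_neg]
        linear_combination (7/8 : ℂ) * Htr + (5/8 : ℂ) * H1 + (-1/4 : ℂ) * r10 + (-1/4 : ℂ) * r20 + (-3/8 : ℂ) * r11 + (3/8 : ℂ) * r21 + (-3/8 : ℂ) * r12 + (3/8 : ℂ) * r22 + (-1/4 : ℂ) * c10 + (-1/4 : ℂ) * c20 + (-1/16 : ℂ) * hd + (-1/16 : ℂ) * hds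
    have hrec' : ρ = rhoc (d/4) (star (d/4)) := by
      rw [hrec]
      congr 1
      rw [star_div₀]
      norm_num
    -- the bound |d/4| ≤ 1/2
    have hbound : ‖d/4‖ ≤ 1/2 := by
      have h0 := hpsd.dotProduct_mulVec_nonneg (fun p => (-(d/4)) * Y1 p + ((‖d/4‖ : ℝ) : ℂ) * Y2 p)
      rw [hrec', rhoc_quad (d/4)] at h0
      have h0' : (0:ℝ) ≤ 4 * (‖d/4‖)^2 - 8 * (‖d/4‖)^3 :=
        Complex.zero_le_real.mp h0
      by_contra hcon
      push_neg at hcon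
      have hpos : 0 < ‖d/4‖ := lt_trans (by norm_num) hcon
      nlinarith [mul_pos hpos hpos, mul_lt_mul_of_pos_left hcon (mul_pos hpos hpos)]
    -- assemble the convex combination
    set S := {M | ∃ β : ℝ, M = outer (xi β) (xi β)} with hS
    set a : ℝ := ‖d/4‖ with ha
    have ht0 : (0:ℝ) ≤ 1/2 + a := by positivity
    have ht1 : (0:ℝ) ≤ 1 - (1/2 + a) := by
      have : a ≤ 1/2 := hbound
      linarith
    have hsum : (1/2 + a) + (1 - (1/2 + a)) = 1 := by ring
    have hcomb : (1/2 + a) • outer (xi (-(d/4).arg)) (xi (-(d/4).arg))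
        + (1 - (1/2 + a)) • outer (xi (-(d/4).arg + Real.pi)) (xi (-(d/4).arg + Real.pi)) = ρ := by
      rw [outer_xi_eq, outer_xi_eq, rhoc_combo _ _ hsum, hrec']
      rw [ha]
      rw [disk_point (d/4), disk_point_star (d/4)]
    rw [← hcomb]
    exact (convex_convexHull ℝ S) (subset_convexHull ℝ S ⟨-(d/4).arg, rfl⟩)
      (subset_convexHull ℝ S ⟨-(d/4).arg + Real.pi, rfl⟩) ht0 ht1 hsum
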